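/- Let m, n be positive integers, G a real m×n matrix, a ∈ ℝ^m, and λ ≥ 0. Then the infimum over k ∈ ℝ^n of the quantity sup{‖(G + Δ)k − a‖₂ : Δ ∈ ℝ^{m×n}, ‖Δ‖_F ≤ λ} equals the infimum over k ∈ ℝ^n of ‖Gk − a‖₂ + λ‖k‖₂; moreover, k minimizes the first objective if and only if it minimizes the second. -/

import Mathlib

open scoped BigOperators

/-- Frobenius norm of a real matrix: `‖M‖_F = sqrt (∑ i j, M i j ^ 2)`. -/
noncomputable def frobeniusNorm {m n : ℕ} (M : Matrix (Fin m) (Fin n) ℝ) : ℝ :=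
  Real.sqrt (∑ i, ∑ j, (M i j) ^ 2)

/-- Euclidean norm of a real vector. -/
noncomputable def euclNorm {m : ℕ} (v : Fin m → ℝ) : ℝ :=
  Real.sqrt (∑ i, (v i) ^ 2)

/-- The robust objective: `k ↦ sup {‖(G + Δ) k − a‖₂ : ‖Δ‖_F ≤ λ}`. -/
noncomputable def robustObj {m n : ℕ} (G : Matrix (Fin m) (Fin n) ℝ) (a : Fin m → ℝ)
    (lam : ℝ) (k : Fin n → ℝ) : ℝ :=
  sSup {x : ℝ | ∃ Δ : Matrix (Fin m) (Fin n) ℝ, frobeniusNorm Δ ≤ lam ∧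
        x = euclNorm ((G + Δ).mulVec k - a)}

/-- The regularized objective: `k ↦ ‖G k − a‖₂ + λ ‖k‖₂`. -/
noncomputable def regObj {m n : ℕ} (G : Matrix (Fin m) (Fin n) ℝ) (a : Fin m → ℝ)
    (lam : ℝ) (k : Fin n → ℝ) : ℝ :=
  euclNorm (G.mulVec k - a) + lam * euclNorm k

/-!
For fixed `k`, the triangle inequality and `‖Δ k‖ ≤ ‖Δ‖_F ‖k‖` bound every perturbed residual
`‖(G + Δ) k - a‖` with `‖Δ‖_F ≤ λ` by `‖G k - a‖ + λ ‖k‖`, and the rank-one perturbation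
`Δ = (λ / ‖k‖) u kᵀ`, where `u` is a unit vector pointing along `G k - a` (any unit vector if
`G k = a`), attains this bound. So the two objectives agree pointwise.
-/

open Matrix WithLp
open scoped Matrix.Norms.Frobenius

section Norms

variable {α : Type*} [RCLike α] {m n : Type*} [Fintype m] [Fintype n]

theorem Matrix.norm_toLp_mulVec_le (M : Matrix m n α) (v : n → α) :
    ‖toLp 2 (M *ᵥ v)‖ ≤ ‖M‖ * ‖toLp 2 v‖ := by
  simpa only [← replicateCol_mulVec, frobenius_norm_replicateCol] using
    frobenius_norm_mul M (replicateCol Unit v)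

theorem Matrix.norm_vecMulVec_le (u : m → α) (v : n → α) :
    ‖vecMulVec u v‖ ≤ ‖toLp 2 u‖ * ‖toLp 2 v‖ := by
  simpa only [vecMulVec_eq Unit, frobenius_norm_replicateCol, frobenius_norm_replicateRow] using
    frobenius_norm_mul (replicateCol Unit u) (replicateRow Unit v)

end Norms

theorem exists_norm_eq_one_and_eq_norm_smul {E : Type*} [NormedAddCommGroup E] [NormedSpace ℝ E]
    [Nontrivial E] (r : E) : ∃ u : E, ‖u‖ = 1 ∧ r = ‖r‖ • u := by
  rcases eq_or_ne r 0 with rfl | hr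
  · obtain ⟨u, hu⟩ := exists_norm_eq E zero_le_one
    exact ⟨u, hu, by simp⟩
  · refine ⟨‖r‖⁻¹ • r, norm_smul_inv_norm hr, ?_⟩
    rw [smul_smul, mul_inv_cancel₀ (norm_ne_zero_iff.2 hr), one_smul]

theorem norm_add_smul_of_eq_norm_smul {E : Type*} [NormedAddCommGroup E] [NormedSpace ℝ E]
    {r u : E} (hu : ‖u‖ = 1) (hr : r = ‖r‖ • u) {t : ℝ} (ht : 0 ≤ t) :
    ‖r + t • u‖ = ‖r‖ + t := by
  rw [hr, ← add_smul, norm_smul, hu, mul_one, ← hr, Real.norm_of_nonneg (by positivity)]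

theorem euclNorm_eq_norm {m : ℕ} (v : Fin m → ℝ) : euclNorm v = ‖toLp 2 v‖ := by
  simp [euclNorm, EuclideanSpace.norm_eq]

theorem frobeniusNorm_eq_norm {m n : ℕ} (M : Matrix (Fin m) (Fin n) ℝ) :
    frobeniusNorm M = ‖M‖ := by
  simp [frobeniusNorm, frobenius_norm_def, Real.sqrt_eq_rpow]

section Objectives

variable {m n : ℕ} (G : Matrix (Fin m) (Fin n) ℝ) (a : Fin m → ℝ) {lam : ℝ} (k : Fin n → ℝ)

theorem euclNorm_perturbed_residual_le {Δ : Matrix (Fin m) (Fin n) ℝ}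
    (hΔ : frobeniusNorm Δ ≤ lam) :
    euclNorm ((G + Δ) *ᵥ k - a) ≤ regObj G a lam k := by
  rw [frobeniusNorm_eq_norm] at hΔ
  simp only [regObj, euclNorm_eq_norm, add_mulVec, add_sub_right_comm, toLp_add]
  calc ‖toLp 2 (G *ᵥ k - a) + toLp 2 (Δ *ᵥ k)‖
      ≤ ‖toLp 2 (G *ᵥ k - a)‖ + ‖Δ‖ * ‖toLp 2 k‖ :=
        (norm_add_le _ _).trans (by gcongr; exact norm_toLp_mulVec_le Δ k)
    _ ≤ ‖toLp 2 (G *ᵥ k - a)‖ + lam * ‖toLp 2 k‖ := by gcongr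

theorem exists_perturbation_euclNorm_residual_eq (hm : 0 < m) (hlam : 0 ≤ lam) :
    ∃ Δ : Matrix (Fin m) (Fin n) ℝ, frobeniusNorm Δ ≤ lam ∧
      euclNorm ((G + Δ) *ᵥ k - a) = regObj G a lam k := by
  have : Nonempty (Fin m) := ⟨⟨0, hm⟩⟩
  obtain ⟨u, hu, hru⟩ := exists_norm_eq_one_and_eq_norm_smul (toLp 2 (G *ᵥ k - a))
  set κ := ‖toLp 2 k‖
  -- for `k = 0` this is the zero matrix, since `lam / 0 = 0`
  refine ⟨(lam / κ) • vecMulVec (ofLp u) k, ?_, ?_⟩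
  · rw [frobeniusNorm_eq_norm, norm_smul, Real.norm_of_nonneg (by positivity)]
    calc lam / κ * ‖vecMulVec (ofLp u) k‖ ≤ lam / κ * (‖u‖ * κ) := by
          gcongr; exact norm_vecMulVec_le _ _
      _ ≤ lam := by rcases eq_or_ne κ 0 with hκ | hκ <;> simp [hu, hκ, hlam]
  · have hkk : k ⬝ᵥ k = κ ^ 2 := by
      rw [← real_inner_self_eq_norm_sq, EuclideanSpace.inner_eq_star_dotProduct]; simp
    have hΔk : ((lam / κ) • vecMulVec (ofLp u) k) *ᵥ k = (lam * κ) • ofLp u := by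
      rw [smul_mulVec, vecMulVec_mulVec, op_smul_eq_smul, hkk, smul_smul]
      congr 1
      rcases eq_or_ne κ 0 with hκ | hκ
      · simp [hκ]
      · field_simp
    rw [regObj, euclNorm_eq_norm, euclNorm_eq_norm, euclNorm_eq_norm, add_mulVec,
      add_sub_right_comm, hΔk, toLp_add, toLp_smul, toLp_ofLp,
      norm_add_smul_of_eq_norm_smul hu hru (by positivity)]

theorem robustObj_eq_regObj (hm : 0 < m) (hlam : 0 ≤ lam) :
    robustObj G a lam k = regObj G a lam k := by
  refine IsGreatest.csSup_eq ⟨?_, ?_⟩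
  · obtain ⟨Δ, hΔ, hres⟩ := exists_perturbation_euclNorm_residual_eq G a k hm hlam
    exact ⟨Δ, hΔ, hres.symm⟩
  · rintro x ⟨Δ, hΔ, rfl⟩
    exact euclNorm_perturbed_residual_le G a k hΔ

end Objectives

theorem robust_eq_regularized_general (m n : ℕ) (hm : 0 < m)
    (G : Matrix (Fin m) (Fin n) ℝ) (a : Fin m → ℝ) (lam : ℝ) (hlam : 0 ≤ lam) :
    (⨅ k : Fin n → ℝ, robustObj G a lam k) = (⨅ k : Fin n → ℝ, regObj G a lam k) ∧
    ∀ k : Fin n → ℝ,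
      ((∀ k' : Fin n → ℝ, robustObj G a lam k ≤ robustObj G a lam k') ↔
        (∀ k' : Fin n → ℝ, regObj G a lam k ≤ regObj G a lam k')) := by
  have h k : robustObj G a lam k = regObj G a lam k := robustObj_eq_regObj G a k hm hlam
  simp only [h, implies_true, and_true]

/-- The infimum over `k` of the robust objective equals the infimum over `k` of the
regularized objective, and `k` minimizes one objective iff it minimizes the other. -/
theorem robust_eq_regularized (m n : ℕ) (hm : 0 < m) (hn : 0 < n)
    (G : Matrix (Fin m) (Fin n) ℝ) (a : Fin m → ℝ) (lam : ℝ) (hlam : 0 ≤ lam) :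
    (⨅ k : Fin n → ℝ, robustObj G a lam k) = (⨅ k : Fin n → ℝ, regObj G a lam k) ∧
    ∀ k : Fin n → ℝ,
      ((∀ k' : Fin n → ℝ, robustObj G a lam k ≤ robustObj G a lam k') ↔
        (∀ k' : Fin n → ℝ, regObj G a lam k ≤ regObj G a lam k')) :=
  robust_eq_regularized_general m n hm G a lam hlam
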